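/- CHL is closed under substitution: if CHL ⊢ φ, then CHL ⊢ φ[p₀:ψ₀,...,p_{k-1}:ψ_{k-1}] for any formulas ψ₀,...,ψ_{k-1}. -/

import Mathlib

/-!
Cyclic syntax for Cyclic Henkin Logic (Visser, "Cyclic Henkin Logic").

A graph is a directed pointed labeled graph with ordered successors;
formulas of the cyclic modal language `𝕃°` are such graphs over the
modal labels, whose box-occurrences guard all cycles.
-/


theorem finite_option {α : Type} (h : Finite α) : Finite (Option α) := by
  haveI := h
  haveI : Fintype α := Fintype.ofFinite _
  exact Finite.of_fintype _

/-- Directed pointed labeled graphs with ordered successors over a label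
set `L` with arity function `ar`.  The vertex set is finite. -/
structure RGraph (L : Type) (ar : L → ℕ) : Type 1 where
  V : Type
  fin : Finite V
  root : V
  label : V → L
  succ : (a : V) → Fin (ar (label a)) → V

namespace RGraph

variable {L : Type} {ar : L → ℕ}

/-- The edge relation `a Ŝ b`. -/
def Edge (G : RGraph L ar) (a b : G.V) : Prop := ∃ i, G.succ a i = b

/-- Every vertex is reachable from the root by a finite path. -/
def Reachable (G : RGraph L ar) : Prop :=
  ∀ a, Relation.ReflTransGen G.Edge G.root a

/-- `C` is a cycle: its elements can be arranged in a closed path of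
pairwise distinct vertices. -/
def IsCycle (G : RGraph L ar) (C : Set G.V) : Prop :=
  ∃ (k : ℕ) (f : Fin (k + 1) → G.V), Function.Injective f ∧ Set.range f = C ∧
    (∀ i : Fin k, G.Edge (f i.castSucc) (f i.succ)) ∧ G.Edge (f (Fin.last k)) (f 0)

/-- A guard: a set of vertices meeting every cycle. -/
def IsGuard (G : RGraph L ar) (W : Set G.V) : Prop :=
  ∀ C, G.IsCycle C → (C ∩ W).Nonempty

/-- The number of cycles `c(G)`. -/
noncomputable def numCycles (G : RGraph L ar) : ℕ :=
  Set.ncard {C : Set G.V | G.IsCycle C}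

/-- A vertex on a cycle. -/
def OnCycle (G : RGraph L ar) (a : G.V) : Prop := ∃ C, G.IsCycle C ∧ a ∈ C

/-- The root is a cycle vertex. -/
def RootOnCycle (G : RGraph L ar) : Prop := G.OnCycle G.root

/-- Acyclic graphs. -/
def Acyclic (G : RGraph L ar) : Prop := ∀ C, ¬ G.IsCycle C

/-- Bisimulations between graphs. -/
def IsBisim (G G' : RGraph L ar) (R : G.V → G'.V → Prop) : Prop :=
  ∀ a a', R a a' → ∃ h : G.label a = G'.label a',
    ∀ i : Fin (ar (G.label a)),
      R (G.succ a i) (G'.succ a' (Fin.cast (congrArg ar h) i))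

/-- Bisimilarity `G ≃ G'`: some bisimulation relates the roots. -/
def Bisim (G G' : RGraph L ar) : Prop :=
  ∃ R, G.IsBisim G' R ∧ R G.root G'.root

/-- Isomorphism `G ≅ G'`: a bijective bisimulation relating the roots. -/
def Iso (G G' : RGraph L ar) : Prop :=
  ∃ e : G.V ≃ G'.V, G.IsBisim G' (fun a b => e a = b) ∧ e G.root = G'.root

end RGraph

/-- Labels for the cyclic modal language `𝕃°`. -/
inductive FLab : Type
  | top | bot | var (n : ℕ) | neg | box | and | or | imp
deriving DecidableEq

/-- Arities of the labels. -/
@[reducible] def FLab.ar : FLab → ℕ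
  | .top => 0 | .bot => 0 | .var _ => 0
  | .neg => 1 | .box => 1
  | .and => 2 | .or => 2 | .imp => 2

/-- Raw formulas of `𝕃°`: graphs over the modal labels. -/
abbrev Fm := RGraph FLab FLab.ar

namespace Fm

/-- `p` occurs in `φ`. -/
def Occurs (φ : Fm) (p : ℕ) : Prop := ∃ a, φ.label a = .var p

/-- The set `bo(φ)` of box-occurrences. -/
def boOcc (φ : Fm) : Set φ.V := {a | φ.label a = .box}

/-- The guard condition: every cycle contains a box-occurrence. -/
def Guarded (φ : Fm) : Prop := φ.IsGuard φ.boOcc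

/-- `φ` is a formula: a (rooted, reachable) graph whose box-occurrences
form a guard. -/
def WF (φ : Fm) : Prop := φ.Reachable ∧ φ.Guarded

/-- An edge leaving a non-box vertex. -/
def EdgeNB (φ : Fm) (a b : φ.V) : Prop := φ.Edge a b ∧ φ.label a ≠ .box

/-- `φ` is modalised in `p`: every path from the root to a `p`-occurrence
passes through a box-occurrence. -/
def Modalised (φ : Fm) (p : ℕ) : Prop :=
  ∀ a, Relation.ReflTransGen φ.EdgeNB φ.root a → φ.label a ≠ .var p

theorem Modalised.root_ne {φ : Fm} {p : ℕ} (h : φ.Modalised p) :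
    φ.label φ.root ≠ .var p :=
  h φ.root Relation.ReflTransGen.refl

/-! ### Operations on formulas -/

/-- One-point graph with a 0-ary label. -/
def ofLab0 (l : FLab) : Fm where
  V := PUnit
  fin := inferInstance
  root := .unit
  label := fun _ => l
  succ := fun _ _ => .unit

def topFm : Fm := ofLab0 .top
def botFm : Fm := ofLab0 .bot
def varFm (n : ℕ) : Fm := ofLab0 (.var n)

def lab1 (l : FLab) (φ : Fm) : Option φ.V → FLab
  | none => l
  | some a => φ.label a

/-- Add a fresh root with 1-ary label `l` above `φ`. -/
def ofLab1 (l : FLab) (φ : Fm) : Fm where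
  V := Option φ.V
  fin := finite_option φ.fin
  root := none
  label := lab1 l φ
  succ := fun a => match a with
    | none => fun _ => some φ.root
    | some b => fun i => some (φ.succ b i)

def neg (φ : Fm) : Fm := ofLab1 .neg φ
def box (φ : Fm) : Fm := ofLab1 .box φ

def lab2 (l : FLab) (φ ψ : Fm) : Option (φ.V ⊕ ψ.V) → FLab
  | none => l
  | some (.inl a) => φ.label a
  | some (.inr b) => ψ.label b

/-- Add a fresh root with 2-ary label `l` above the disjoint sum of `φ`, `ψ`. -/
def ofLab2 (l : FLab) (φ ψ : Fm) : Fm where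
  V := Option (φ.V ⊕ ψ.V)
  fin := finite_option (by haveI := φ.fin; haveI := ψ.fin; exact inferInstance)
  root := none
  label := lab2 l φ ψ
  succ := fun a => match a with
    | none => fun i => if (i : ℕ) = 0 then some (.inl φ.root) else some (.inr ψ.root)
    | some (.inl a) => fun i => some (.inl (φ.succ a i))
    | some (.inr b) => fun i => some (.inr (ψ.succ b i))

def and (φ ψ : Fm) : Fm := ofLab2 .and φ ψ
def or (φ ψ : Fm) : Fm := ofLab2 .or φ ψ
def imp (φ ψ : Fm) : Fm := ofLab2 .imp φ ψ

/-- `φ ↔ ψ` as `(φ→ψ) ∧ (ψ→φ)`. -/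
def iff (φ ψ : Fm) : Fm := Fm.and (Fm.imp φ ψ) (Fm.imp ψ φ)

/-- The fixed point `Ϝp.φ`: identify the root with all `p`-occurrences,
keeping the label of the root.  (The root is not a `p`-occurrence, e.g.
because `φ` is modalised in `p`.) -/
def fix (φ : Fm) (p : ℕ) (h : φ.label φ.root ≠ .var p) : Fm where
  V := {a : φ.V // φ.label a ≠ .var p}
  fin := by haveI := φ.fin; exact inferInstance
  root := ⟨φ.root, h⟩
  label := fun a => φ.label a.1
  succ := fun a i =>
    if hb : φ.label (φ.succ a.1 i) = .var p then ⟨φ.root, h⟩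
    else ⟨φ.succ a.1 i, hb⟩

/-! ### Substitution -/

def varIdx : FLab → Option ℕ
  | .var q => some q
  | _ => none

/-- The copy of `σ q` hanging at a `q`-occurrence. -/
def copyT (σ : ℕ → Fm) : Option ℕ → Type
  | some q => (σ q).V
  | none => PUnit

theorem copyT_finite (σ : ℕ → Fm) : ∀ o, Finite (copyT σ o)
  | some q => (σ q).fin
  | none => show Finite PUnit from inferInstance

def copyRoot (σ : ℕ → Fm) : ∀ o, copyT σ o
  | some q => (σ q).root
  | none => .unit

def copyLabel (σ : ℕ → Fm) (d : FLab) : ∀ o, copyT σ o → FLab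
  | some q, b => (σ q).label b
  | none, _ => d

/-- Vertices of the substitution `φσ`. -/
def SubV (φ : Fm) (σ : ℕ → Fm) : Type :=
  Σ a : φ.V, copyT σ (varIdx (φ.label a))

def substSucc (φ : Fm) (σ : ℕ → Fm) (a : φ.V) :
    ∀ (o : Option ℕ), o = varIdx (φ.label a) → ∀ b : copyT σ o,
      Fin (copyLabel σ (φ.label a) o b).ar → SubV φ σ
  | some q, h, b, i => ⟨a, cast (congrArg (copyT σ) h) ((σ q).succ b i)⟩
  | none, _, _, i => ⟨φ.succ a i, copyRoot σ _⟩

/-- Simultaneous substitution: every `q`-occurrence of `φ` is identified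
with the root of a disjoint copy of `σ q`, keeping the label of the root
of `σ q`. -/
def subst (φ : Fm) (σ : ℕ → Fm) : Fm where
  V := SubV φ σ
  fin := by
    haveI := φ.fin
    haveI : ∀ a : φ.V, Finite (copyT σ (varIdx (φ.label a))) :=
      fun a => copyT_finite σ _
    exact (inferInstance : Finite (Σ a : φ.V, copyT σ (varIdx (φ.label a))))
  root := ⟨φ.root, copyRoot σ _⟩
  label := fun x => copyLabel σ (φ.label x.1) _ x.2
  succ := fun x => substSucc φ σ x.1 _ rfl x.2

/-- Substitution of a single variable, `φ[p:ψ]`. -/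
def subst1 (φ : Fm) (p : ℕ) (ψ : Fm) : Fm :=
  φ.subst (fun q => if q = p then ψ else varFm q)

/-! ### Snip -/

-- Redirect all incoming edges of the root to a new leaf labeled `p`.
open Classical in
noncomputable def snipC (φ : Fm) (p : ℕ) : Fm where
  V := Option φ.V
  fin := finite_option φ.fin
  root := some φ.root
  label := lab1 (.var p) φ
  succ := fun a => match a with
    | none => Fin.elim0
    | some a => fun i =>
        if φ.succ a i = φ.root then none else some (φ.succ a i)

-- `snip(φ,p)`: if the root is on a cycle, redirect all incoming edges
-- of the root to a new leaf labeled `p`; otherwise `φ` itself.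
open Classical in
noncomputable def snip (φ : Fm) (p : ℕ) : Fm :=
  if φ.RootOnCycle then φ.snipC p else φ

/-- `snip(φ,ψ) := snip(φ,p)[p:ψ]` (for a variable `p` not occurring in `φ`). -/
noncomputable def snipF (φ : Fm) (p : ℕ) (ψ : Fm) : Fm :=
  (φ.snip p).subst1 p ψ

theorem snip_root_ne {φ : Fm} {p : ℕ} (h : φ.RootOnCycle) (hp : ¬ φ.Occurs p) :
    (φ.snip p).label (φ.snip p).root ≠ .var p := by
  rw [snip, if_pos h]
  exact fun hc => hp ⟨φ.root, hc⟩

/-! ### The transitive closure modality `□•φ := Ϝp.□(φ∧p)` -/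

def bslab (φ : Fm) : Option (Option φ.V) → FLab
  | none => .box
  | some none => .and
  | some (some a) => φ.label a

/-- `□•φ := Ϝp.□(φ∧p)`, for `p` not occurring in `φ`: a box-root whose
`∧`-successor returns to the box-root. -/
def boxStar (φ : Fm) : Fm where
  V := Option (Option φ.V)
  fin := finite_option (finite_option φ.fin)
  root := none
  label := bslab φ
  succ := fun a => match a with
    | none => fun _ => some none
    | some none => fun i => if (i : ℕ) = 0 then some (some φ.root) else none
    | some (some a) => fun i => some (some (φ.succ a i))

/-- `⊡•φ := φ ∧ □•φ`. -/
def boxDotStar (φ : Fm) : Fm := Fm.and φ (boxStar φ)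

/-- Finite conjunctions. -/
def bigAnd : List Fm → Fm
  | [] => topFm
  | φ :: l => Fm.and φ (bigAnd l)

/-- Apply a label, as a connective, to arguments. -/
def applyLab : (l : FLab) → (Fin l.ar → Fm) → Fm
  | .top, _ => topFm
  | .bot, _ => botFm
  | .var n, _ => varFm n
  | .neg, f => neg (f 0)
  | .box, f => box (f 0)
  | .and, f => Fm.and (f 0) (f 1)
  | .or, f => Fm.or (f 0) (f 1)
  | .imp, f => Fm.imp (f 0) (f 1)

/-- First successor (defaulting to `a` itself at leaves). -/
def succ0 (φ : Fm) (a : φ.V) : φ.V :=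
  if h : 0 < (φ.label a).ar then φ.succ a ⟨0, h⟩ else a

/-- The subgraph of `φ` generated by `a`. -/
def restrict (φ : Fm) (a : φ.V) : Fm where
  V := {b : φ.V // Relation.ReflTransGen φ.Edge a b}
  fin := by haveI := φ.fin; exact inferInstance
  root := ⟨a, Relation.ReflTransGen.refl⟩
  label := fun b => φ.label b.1
  succ := fun b i => ⟨φ.succ b.1 i, b.2.tail ⟨i, rfl⟩⟩

/-- A variable not occurring in `φ`. -/
noncomputable def freshVar (φ : Fm) : ℕ := by
  classical
  haveI := φ.fin
  haveI : Fintype φ.V := Fintype.ofFinite _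
  exact Finset.univ.sup fun a => match φ.label a with | .var q => q + 1 | _ => 0

/-- `snip(φ,⊤)`. -/
noncomputable def snipTop (φ : Fm) : Fm := φ.snipF φ.freshVar topFm

/-- The list of box-occurrences of `φ`. -/
noncomputable def boxOccList (φ : Fm) : List φ.V := by
  classical
  haveI := φ.fin
  haveI : Fintype φ.V := Fintype.ofFinite _
  exact (Finset.univ.filter fun a => φ.label a = FLab.box).toList

end Fm

/-! ### Propositional tautologies (as parse trees) -/

inductive PForm : Type
  | var (n : ℕ) | top | bot
  | neg (A : PForm) | and (A B : PForm) | or (A B : PForm) | imp (A B : PForm)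

def PForm.eval (v : ℕ → Bool) : PForm → Bool
  | .var n => v n
  | .top => true
  | .bot => false
  | .neg A => !A.eval v
  | .and A B => A.eval v && B.eval v
  | .or A B => A.eval v || B.eval v
  | .imp A B => !A.eval v || B.eval v

/-- Propositional tautology. -/
def PForm.Taut (A : PForm) : Prop := ∀ v, A.eval v = true

/-- Substitution instance of a parse tree by formulas of `𝕃°`. -/
def PForm.substFm (σ : ℕ → Fm) : PForm → Fm
  | .var n => σ n
  | .top => Fm.topFm
  | .bot => Fm.botFm
  | .neg A => Fm.neg (A.substFm σ)
  | .and A B => Fm.and (A.substFm σ) (B.substFm σ)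
  | .or A B => Fm.or (A.substFm σ) (B.substFm σ)
  | .imp A B => Fm.imp (A.substFm σ) (B.substFm σ)

/-! ### Cyclic Henkin Logic -/

/-- Cyclic Henkin Logic `CHL`: modus ponens, necessitation, substitution
instances of propositional tautologies, distribution, bisimilarity, and
Löb's Rule. -/
inductive CHL : Fm → Prop
  | mp {φ ψ : Fm} : CHL (Fm.imp φ ψ) → CHL φ → CHL ψ
  | nec {φ : Fm} : CHL φ → CHL (Fm.box φ)
  | taut {A : PForm} (σ : ℕ → Fm) : A.Taut → CHL (A.substFm σ)
  | k (φ ψ : Fm) : CHL (Fm.imp (Fm.box (Fm.imp φ ψ)) (Fm.imp (Fm.box φ) (Fm.box ψ)))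
  | bisim {φ ψ : Fm} : RGraph.Bisim φ ψ → CHL (Fm.iff φ ψ)
  | lob {φ : Fm} : CHL (Fm.imp (Fm.box φ) φ) → CHL φ

/-- `GL°`: `CHL` plus the axiom scheme `□φ → □□φ`. -/
inductive GLo : Fm → Prop
  | mp {φ ψ : Fm} : GLo (Fm.imp φ ψ) → GLo φ → GLo ψ
  | nec {φ : Fm} : GLo φ → GLo (Fm.box φ)
  | taut {A : PForm} (σ : ℕ → Fm) : A.Taut → GLo (A.substFm σ)
  | k (φ ψ : Fm) : GLo (Fm.imp (Fm.box (Fm.imp φ ψ)) (Fm.imp (Fm.box φ) (Fm.box ψ)))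
  | bisim {φ ψ : Fm} : RGraph.Bisim φ ψ → GLo (Fm.iff φ ψ)
  | lob {φ : Fm} : GLo (Fm.imp (Fm.box φ) φ) → GLo φ
  | four (φ : Fm) : GLo (Fm.imp (Fm.box φ) (Fm.box (Fm.box φ)))

/-- Löb's Logic `GL` on the acyclic formulas. -/
inductive GLlogic : Fm → Prop
  | mp {φ ψ : Fm} : GLlogic (Fm.imp φ ψ) → GLlogic φ → GLlogic ψ
  | nec {φ : Fm} : GLlogic φ → GLlogic (Fm.box φ)
  | taut {A : PForm} (σ : ℕ → Fm) : (∀ q, (σ q).Acyclic) → A.Taut → GLlogic (A.substFm σ)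
  | k (φ ψ : Fm) : φ.Acyclic → ψ.Acyclic →
      GLlogic (Fm.imp (Fm.box (Fm.imp φ ψ)) (Fm.imp (Fm.box φ) (Fm.box ψ)))
  | bisim {φ ψ : Fm} : φ.Acyclic → ψ.Acyclic → RGraph.Bisim φ ψ → GLlogic (Fm.iff φ ψ)
  | lob {φ : Fm} : φ.Acyclic → GLlogic (Fm.imp (Fm.box φ) φ) → GLlogic φ
  | four (φ : Fm) : φ.Acyclic → GLlogic (Fm.imp (Fm.box φ) (Fm.box (Fm.box φ)))

/-! ### Systems of equations -/

/-- The system `ℰ` (given by `E` on the finite variable set `Q`) is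
modalised: its dependency graph is acyclic. -/
def SysModalised (Q : Finset ℕ) (E : ℕ → Fm) : Prop :=
  ∀ q ∈ Q, ¬ Relation.TransGen
      (fun x y => x ∈ Q ∧ y ∈ Q ∧ ¬ (E x).Modalised y) q q

/-- The substitution determined by a solution candidate `F` on `Q`. -/
def sysSubst (Q : Finset ℕ) (F : ℕ → Fm) : ℕ → Fm :=
  fun q => if q ∈ Q then F q else Fm.varFm q

/-- `F` solves the system `E` on `Q`. -/
def IsSolution (Q : Finset ℕ) (E : ℕ → Fm) (F : ℕ → Fm) : Prop :=
  (∀ q ∈ Q, (F q).WF) ∧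
  (∀ q ∈ Q, ∀ q' ∈ Q, ¬ (F q).Occurs q') ∧
  (∀ q ∈ Q, RGraph.Bisim (F q) ((E q).subst (sysSubst Q F)))

/-! ### Local translations -/

/-- A local translation of the formula `φ` into the logic `Λ`. -/
def IsLocalTranslation (Λ : Fm → Prop) (φ : Fm) (T : φ.V → Fm) : Prop :=
  ∀ a : φ.V, Λ (Fm.iff (T a) (Fm.applyLab (φ.label a) (fun i => T (φ.succ a i))))

-- Substitution determined by a finite assignment.
open Classical in
noncomputable def substOf {ι : Type} (s : ι → ℕ) (ψ : ι → Fm) : ℕ → Fm :=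
  fun q => if h : ∃ i, s i = q then ψ h.choose else Fm.varFm q

/-- The characterising equations of the de Jongh–Sambin map `js*`,
defined by course-of-values recursion on the number of cycles and guard
recursion on the box-occurrences on a cycle. -/
def IsJsStar (jsS : (φ : Fm) → φ.V → Fm) : Prop :=
  (∀ (φ : Fm) (a : φ.V), ¬ (φ.label a = .box ∧ φ.OnCycle a) →
      jsS φ a = Fm.applyLab (φ.label a) (fun i => jsS φ (φ.succ a i))) ∧
  (∀ (φ : Fm) (a : φ.V), φ.label a = .box → φ.OnCycle a →
      jsS φ a = jsS (Fm.snipTop (φ.restrict a)) (Fm.snipTop (φ.restrict a)).root) ∧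
  (∀ (φ : Fm) (a : φ.V), (jsS φ a).Acyclic)

/-! ### Auxiliary lemmas for closure under substitution -/

section ChlSubstAux

open Fm

/-- Bisimilarity is reflexive. -/
theorem bisim_refl (G : Fm) : RGraph.Bisim G G :=
  ⟨Eq, fun a a' h => by subst h; exact ⟨rfl, fun _ => rfl⟩, rfl⟩

theorem isBisim_flip {G G' : Fm} {R : G.V → G'.V → Prop}
    (h : RGraph.IsBisim G G' R) :
    RGraph.IsBisim G' G (fun a' a => R a a') := by
  intro a' a hR
  obtain ⟨e, hs⟩ := h a a' hR
  exact ⟨e.symm, fun j => hs (Fin.cast (congrArg FLab.ar e.symm) j)⟩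

theorem bisim_symm {G G' : Fm} (h : RGraph.Bisim G G') : RGraph.Bisim G' G := by
  obtain ⟨R, hB, hr⟩ := h
  exact ⟨fun a' a => R a a', isBisim_flip hB, hr⟩

theorem bisim_trans {A B C : Fm} (h1 : RGraph.Bisim A B) (h2 : RGraph.Bisim B C) :
    RGraph.Bisim A C := by
  obtain ⟨R, hR, hr⟩ := h1
  obtain ⟨S, hS, hs⟩ := h2
  refine ⟨fun a c => ∃ b, R a b ∧ S b c, ?_, ⟨B.root, hr, hs⟩⟩
  rintro a c ⟨b, hab, hbc⟩
  obtain ⟨e1, f1⟩ := hR a b hab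
  obtain ⟨e2, f2⟩ := hS b c hbc
  exact ⟨e1.trans e2, fun i => ⟨_, f1 i, f2 (Fin.cast (congrArg FLab.ar e1) i)⟩⟩

/-- Transfer of provability along bisimilarity. -/
theorem chl_transfer {φ ψ : Fm} (h : CHL φ) (hb : RGraph.Bisim φ ψ) : CHL ψ := by
  have h1 : CHL (Fm.iff φ ψ) := CHL.bisim hb
  have h2 : CHL (Fm.imp (Fm.iff φ ψ) (Fm.imp φ ψ)) :=
    CHL.taut (A := .imp (.and (.imp (.var 0) (.var 1)) (.imp (.var 1) (.var 0)))
        (.imp (.var 0) (.var 1)))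
      (fun n => match n with | 0 => φ | _ => ψ)
      (by intro v; cases h0 : v 0 <;> cases h1 : v 1 <;> simp [PForm.eval, h0, h1])
  exact CHL.mp (CHL.mp h2 h1) h

/-- Lift a relation to the substituted graphs. -/
def liftRel {φ ψ : Fm} (σ : ℕ → Fm) (R : φ.V → ψ.V → Prop) :
    Fm.SubV φ σ → Fm.SubV ψ σ → Prop :=
  fun x y => R x.1 y.1 ∧ HEq x.2 y.2

theorem copyRoot_heq (σ : ℕ → Fm) {l l' : FLab} (e : l = l') :
    HEq (copyRoot σ (varIdx l)) (copyRoot σ (varIdx l')) := by subst e; rfl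

theorem copyLabel_none (σ : ℕ → Fm) (d : FLab) :
    ∀ (o : Option ℕ), o = none → ∀ b : copyT σ o, copyLabel σ d o b = d := by
  rintro _ rfl _; rfl

theorem copyLabel_key {φ ψ : Fm} (σ : ℕ → Fm) {a : φ.V} {a' : ψ.V}
    (e : φ.label a = ψ.label a') :
    ∀ (o : Option ℕ), o = varIdx (φ.label a) →
      ∀ (o' : Option ℕ), o' = varIdx (ψ.label a') →
      ∀ (b : copyT σ o) (b' : copyT σ o'), HEq b b' →
      copyLabel σ (φ.label a) o b = copyLabel σ (ψ.label a') o' b' := by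
  intro o h o' h' b b' hb
  have ho : o = o' := by rw [h, h', e]
  subst ho
  have hbb : b = b' := eq_of_heq hb
  subst hbb
  cases o with
  | some q => rfl
  | none => exact e

theorem substSucc_key {φ ψ : Fm} (σ : ℕ → Fm) {R : φ.V → ψ.V → Prop}
    (hB : RGraph.IsBisim φ ψ R) {a : φ.V} {a' : ψ.V} (hR : R a a') :
    ∀ (o : Option ℕ) (h : o = varIdx (φ.label a))
      (o' : Option ℕ) (h' : o' = varIdx (ψ.label a'))
      (b : copyT σ o) (b' : copyT σ o'), HEq b b' →
      ∀ (i : Fin (copyLabel σ (φ.label a) o b).ar)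
        (j : Fin (copyLabel σ (ψ.label a') o' b').ar), (i : ℕ) = (j : ℕ) →
      liftRel σ R (substSucc φ σ a o h b i) (substSucc ψ σ a' o' h' b' j) := by
  intro o h o' h' b b' hb
  obtain ⟨e, hs⟩ := hB a a' hR
  have ho : o = o' := by rw [h, h', e]
  subst ho
  have hbb : b = b' := eq_of_heq hb
  subst hbb
  cases o with
  | some q =>
    intro i j hij
    have hj : j = i := Fin.ext hij.symm
    subst hj
    exact ⟨hR, (cast_heq _ _).trans (cast_heq _ _).symm⟩
  | none =>
    intro i j hij
    have hj : j = Fin.cast (congrArg FLab.ar e) i := Fin.ext hij.symm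
    subst hj
    refine ⟨hs i, ?_⟩
    obtain ⟨e2, -⟩ := hB _ _ (hs i)
    exact copyRoot_heq σ e2

theorem subst_isBisim {φ ψ : Fm} (σ : ℕ → Fm) {R : φ.V → ψ.V → Prop}
    (hB : RGraph.IsBisim φ ψ R) :
    RGraph.IsBisim (φ.subst σ) (ψ.subst σ) (liftRel σ R) := by
  rintro ⟨a, c⟩ ⟨a', c'⟩ ⟨hR, hc⟩
  obtain ⟨e, -⟩ := hB a a' hR
  have hlab : (φ.subst σ).label ⟨a, c⟩ = (ψ.subst σ).label ⟨a', c'⟩ :=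
    copyLabel_key σ e _ rfl _ rfl c c' hc
  exact ⟨hlab, fun i => substSucc_key σ hB hR _ rfl _ rfl c c' hc i _ rfl⟩

theorem subst_congr {φ ψ : Fm} (σ : ℕ → Fm) (h : RGraph.Bisim φ ψ) :
    RGraph.Bisim (φ.subst σ) (ψ.subst σ) := by
  obtain ⟨R, hB, hr⟩ := h
  obtain ⟨e, -⟩ := hB _ _ hr
  exact ⟨liftRel σ R, subst_isBisim σ hB, hr, copyRoot_heq σ e⟩

theorem emb_isBisim {φ G : Fm} (f : φ.V → G.V)
    (hl : ∀ u, G.label (f u) = φ.label u)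
    (hs : ∀ u (i : Fin (G.label (f u)).ar),
      G.succ (f u) i = f (φ.succ u (Fin.cast (congrArg FLab.ar (hl u)) i))) :
    RGraph.IsBisim G φ (fun a u => a = f u) := by
  rintro a u rfl
  exact ⟨hl u, fun i => hs u i⟩

theorem substSucc_eq_none' (G : Fm) (σ : ℕ → Fm) (a : G.V) :
    ∀ (o : Option ℕ) (h : o = varIdx (G.label a)), o = none →
      ∀ (b : copyT σ o)
        (e : (copyLabel σ (G.label a) o b).ar = (G.label a).ar)
        (i : Fin (copyLabel σ (G.label a) o b).ar),
      substSucc G σ a o h b i = ⟨G.succ a (Fin.cast e i), copyRoot σ _⟩ := by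
  rintro o h rfl b e i
  rfl

theorem subst_succ_eq_none (G : Fm) (σ : ℕ → Fm) (a : G.V)
    (hn : varIdx (G.label a) = none) (c : copyT σ (varIdx (G.label a)))
    (e : ((G.subst σ).label ⟨a, c⟩).ar = (G.label a).ar)
    (i : Fin ((G.subst σ).label ⟨a, c⟩).ar) :
    (G.subst σ).succ ⟨a, c⟩ i = ⟨G.succ a (Fin.cast e i), copyRoot σ _⟩ :=
  substSucc_eq_none' G σ a _ rfl hn c e i

theorem subst_ofLab0 (l : FLab) (hl : varIdx l = none) (σ : ℕ → Fm) :
    RGraph.Bisim ((ofLab0 l).subst σ) (ofLab0 l) := by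
  refine ⟨fun _ _ => True, ?_, trivial⟩
  rintro ⟨a, c⟩ y -
  exact ⟨copyLabel_none σ _ _ hl c, fun _ => trivial⟩

theorem subst_var (n : ℕ) (σ : ℕ → Fm) :
    RGraph.Bisim ((varFm n).subst σ) (σ n) := by
  refine ⟨fun x b => x.2 = b, ?_, rfl⟩
  rintro ⟨a, c⟩ b rfl
  exact ⟨rfl, fun _ => rfl⟩

theorem subst_ofLab1 (l : FLab) (hl : varIdx l = none) (φ : Fm) (σ : ℕ → Fm) :
    RGraph.Bisim ((ofLab1 l φ).subst σ) (ofLab1 l (φ.subst σ)) := by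
  have hB : RGraph.IsBisim ((ofLab1 l φ).subst σ) (φ.subst σ)
      (liftRel σ (fun a u => a = some u)) :=
    subst_isBisim σ (emb_isBisim (φ := φ) (G := ofLab1 l φ) some (fun _ => rfl) (fun _ _ => rfl))
  refine ⟨fun x y => (x.1 = none ∧ y = none) ∨
      (∃ u, liftRel σ (fun a u => a = some u) x u ∧ y = some u), ?_,
    Or.inl ⟨rfl, rfl⟩⟩
  rintro ⟨a, c⟩ y (⟨rfl, rfl⟩ | ⟨u, hu, rfl⟩)
  · have hn : varIdx ((ofLab1 l φ).label none) = none := hl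
    have hL : ((ofLab1 l φ).subst σ).label ⟨none, c⟩ = (ofLab1 l (φ.subst σ)).label none :=
      copyLabel_none σ _ _ hn c
    refine ⟨hL, fun i => ?_⟩
    rw [subst_succ_eq_none (ofLab1 l φ) σ none hn c (congrArg FLab.ar hL) i]
    exact Or.inr ⟨(φ.subst σ).root, ⟨rfl, HEq.rfl⟩, rfl⟩
  · obtain ⟨e, hsucc⟩ := hB _ _ hu
    exact ⟨e, fun i => Or.inr ⟨_, hsucc i, rfl⟩⟩

theorem subst_ofLab2 (l : FLab) (hl : varIdx l = none) (φ ψ : Fm) (σ : ℕ → Fm) :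
    RGraph.Bisim ((ofLab2 l φ ψ).subst σ) (ofLab2 l (φ.subst σ) (ψ.subst σ)) := by
  have hBφ : RGraph.IsBisim ((ofLab2 l φ ψ).subst σ) (φ.subst σ)
      (liftRel σ (fun a u => a = some (.inl u))) :=
    subst_isBisim σ (emb_isBisim (φ := φ) (G := ofLab2 l φ ψ) (fun u => some (.inl u)) (fun _ => rfl) (fun _ _ => rfl))
  have hBψ : RGraph.IsBisim ((ofLab2 l φ ψ).subst σ) (ψ.subst σ)
      (liftRel σ (fun a v => a = some (.inr v))) :=
    subst_isBisim σ (emb_isBisim (φ := ψ) (G := ofLab2 l φ ψ) (fun v => some (.inr v)) (fun _ => rfl) (fun _ _ => rfl))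
  refine ⟨fun x y => (x.1 = none ∧ y = none) ∨
      (∃ u, liftRel σ (fun a u => a = some (.inl u)) x u ∧ y = some (.inl u)) ∨
      (∃ v, liftRel σ (fun a v => a = some (.inr v)) x v ∧ y = some (.inr v)), ?_,
    Or.inl ⟨rfl, rfl⟩⟩
  rintro ⟨a, c⟩ y (⟨rfl, rfl⟩ | ⟨u, hu, rfl⟩ | ⟨v, hv, rfl⟩)
  · have hn : varIdx ((ofLab2 l φ ψ).label none) = none := hl
    have hL : ((ofLab2 l φ ψ).subst σ).label ⟨none, c⟩ =
        (ofLab2 l (φ.subst σ) (ψ.subst σ)).label none :=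
      copyLabel_none σ _ _ hn c
    refine ⟨hL, fun i => ?_⟩
    rw [subst_succ_eq_none (ofLab2 l φ ψ) σ none hn c (congrArg FLab.ar hL) i]
    have key1 : ∀ (j : Fin ((ofLab2 l φ ψ).label none).ar), (j : ℕ) = 0 →
        (ofLab2 l φ ψ).succ none j = some (.inl φ.root) := fun j hj => if_pos hj
    have key1' : ∀ (j : Fin ((ofLab2 l φ ψ).label none).ar), ¬ (j : ℕ) = 0 →
        (ofLab2 l φ ψ).succ none j = some (.inr ψ.root) := fun j hj => if_neg hj
    have key2 : ∀ (j : Fin ((ofLab2 l (φ.subst σ) (ψ.subst σ)).label none).ar), (j : ℕ) = 0 →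
        (ofLab2 l (φ.subst σ) (ψ.subst σ)).succ none j = some (.inl (φ.subst σ).root) :=
      fun j hj => if_pos hj
    have key2' : ∀ (j : Fin ((ofLab2 l (φ.subst σ) (ψ.subst σ)).label none).ar), ¬ (j : ℕ) = 0 →
        (ofLab2 l (φ.subst σ) (ψ.subst σ)).succ none j = some (.inr (ψ.subst σ).root) :=
      fun j hj => if_neg hj
    by_cases h0 : (i : ℕ) = 0
    · rw [key1 _ h0, key2 _ h0]
      exact Or.inr (Or.inl ⟨(φ.subst σ).root, ⟨rfl, HEq.rfl⟩, rfl⟩)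
    · rw [key1' _ h0, key2' _ h0]
      exact Or.inr (Or.inr ⟨(ψ.subst σ).root, ⟨rfl, HEq.rfl⟩, rfl⟩)
  · obtain ⟨e, hsucc⟩ := hBφ _ _ hu
    exact ⟨e, fun i => Or.inr (Or.inl ⟨_, hsucc i, rfl⟩)⟩
  · obtain ⟨e, hsucc⟩ := hBψ _ _ hv
    exact ⟨e, fun i => Or.inr (Or.inr ⟨_, hsucc i, rfl⟩)⟩

theorem ofLab1_congr (l : FLab) {φ φ' : Fm} (h : RGraph.Bisim φ φ') :
    RGraph.Bisim (ofLab1 l φ) (ofLab1 l φ') := by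
  obtain ⟨R, hB, hr⟩ := h
  refine ⟨fun x y => (x = none ∧ y = none) ∨
      (∃ a a', R a a' ∧ x = some a ∧ y = some a'), ?_, Or.inl ⟨rfl, rfl⟩⟩
  rintro x y (⟨rfl, rfl⟩ | ⟨a, a', hR, rfl, rfl⟩)
  · exact ⟨rfl, fun i => Or.inr ⟨_, _, hr, rfl, rfl⟩⟩
  · obtain ⟨e, hs⟩ := hB a a' hR
    exact ⟨e, fun i => Or.inr ⟨_, _, hs i, rfl, rfl⟩⟩

theorem ofLab2_congr (l : FLab) {φ φ' ψ ψ' : Fm}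
    (h1 : RGraph.Bisim φ φ') (h2 : RGraph.Bisim ψ ψ') :
    RGraph.Bisim (ofLab2 l φ ψ) (ofLab2 l φ' ψ') := by
  obtain ⟨R, hR, hr⟩ := h1
  obtain ⟨S, hS, hs⟩ := h2
  refine ⟨fun x y => (x = none ∧ y = none) ∨
      (∃ a a', R a a' ∧ x = some (.inl a) ∧ y = some (.inl a')) ∨
      (∃ b b', S b b' ∧ x = some (.inr b) ∧ y = some (.inr b')), ?_,
    Or.inl ⟨rfl, rfl⟩⟩
  rintro x y (⟨rfl, rfl⟩ | ⟨a, a', hab, rfl, rfl⟩ | ⟨b, b', hbb, rfl, rfl⟩)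
  · refine ⟨rfl, fun i => ?_⟩
    have key1 : ∀ (j : Fin ((ofLab2 l φ ψ).label none).ar), (j : ℕ) = 0 →
        (ofLab2 l φ ψ).succ none j = some (.inl φ.root) := fun j hj => if_pos hj
    have key1' : ∀ (j : Fin ((ofLab2 l φ ψ).label none).ar), ¬ (j : ℕ) = 0 →
        (ofLab2 l φ ψ).succ none j = some (.inr ψ.root) := fun j hj => if_neg hj
    have key2 : ∀ (j : Fin ((ofLab2 l φ' ψ').label none).ar), (j : ℕ) = 0 →
        (ofLab2 l φ' ψ').succ none j = some (.inl φ'.root) := fun j hj => if_pos hj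
    have key2' : ∀ (j : Fin ((ofLab2 l φ' ψ').label none).ar), ¬ (j : ℕ) = 0 →
        (ofLab2 l φ' ψ').succ none j = some (.inr ψ'.root) := fun j hj => if_neg hj
    have hrfl : (ofLab2 l φ ψ).label none = (ofLab2 l φ' ψ').label none := rfl
    by_cases h0 : (i : ℕ) = 0
    · rw [key1 _ h0, key2 (Fin.cast (congrArg FLab.ar hrfl) i) h0]
      exact Or.inr (Or.inl ⟨_, _, hr, rfl, rfl⟩)
    · rw [key1' _ h0, key2' (Fin.cast (congrArg FLab.ar hrfl) i) h0]
      exact Or.inr (Or.inr ⟨_, _, hs, rfl, rfl⟩)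
  · obtain ⟨e, hsucc⟩ := hR a a' hab
    exact ⟨e, fun i => Or.inr (Or.inl ⟨_, _, hsucc i, rfl, rfl⟩)⟩
  · obtain ⟨e, hsucc⟩ := hS b b' hbb
    exact ⟨e, fun i => Or.inr (Or.inr ⟨_, _, hsucc i, rfl, rfl⟩)⟩

theorem subst_substFm (A : PForm) (σ' σ : ℕ → Fm) :
    RGraph.Bisim ((A.substFm σ').subst σ) (A.substFm (fun n => (σ' n).subst σ)) := by
  induction A with
  | var n => exact bisim_refl _
  | top => exact subst_ofLab0 .top rfl σ
  | bot => exact subst_ofLab0 .bot rfl σ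
  | neg A ih => exact bisim_trans (subst_ofLab1 .neg rfl _ σ) (ofLab1_congr .neg ih)
  | and A B ihA ihB =>
    exact bisim_trans (subst_ofLab2 .and rfl _ _ σ) (ofLab2_congr .and ihA ihB)
  | or A B ihA ihB =>
    exact bisim_trans (subst_ofLab2 .or rfl _ _ σ) (ofLab2_congr .or ihA ihB)
  | imp A B ihA ihB =>
    exact bisim_trans (subst_ofLab2 .imp rfl _ _ σ) (ofLab2_congr .imp ihA ihB)

end ChlSubstAux


/-- `CHL` is closed under substitution (Theorem `thea`): if `CHL ⊢ φ`,
then `CHL ⊢ φσ`. -/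
theorem chl_subst (φ : Fm) (σ : ℕ → Fm) (hφ : φ.WF) (hσ : ∀ q, (σ q).WF)
    (h : CHL φ) : CHL (φ.subst σ) := by
  clear hφ hσ
  induction h with
  | @mp φ' ψ' h1 h2 ih1 ih2 =>
    exact CHL.mp (chl_transfer ih1 (subst_ofLab2 .imp rfl φ' ψ' σ)) ih2
  | @nec φ' h ih =>
    exact chl_transfer (CHL.nec ih) (bisim_symm (subst_ofLab1 .box rfl φ' σ))
  | @taut A σ' ht =>
    exact chl_transfer (CHL.taut _ ht) (bisim_symm (subst_substFm A σ' σ))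
  | k φ' ψ' =>
    refine chl_transfer (CHL.k (φ'.subst σ) (ψ'.subst σ)) (bisim_symm ?_)
    refine bisim_trans (subst_ofLab2 .imp rfl _ _ σ) (ofLab2_congr .imp ?_ ?_)
    · exact bisim_trans (subst_ofLab1 .box rfl _ σ)
        (ofLab1_congr .box (subst_ofLab2 .imp rfl _ _ σ))
    · exact bisim_trans (subst_ofLab2 .imp rfl _ _ σ)
        (ofLab2_congr .imp (subst_ofLab1 .box rfl _ σ) (subst_ofLab1 .box rfl _ σ))
  | @bisim φ' ψ' hb =>
    refine chl_transfer (CHL.bisim (subst_congr σ hb)) (bisim_symm ?_)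
    exact bisim_trans (subst_ofLab2 .and rfl _ _ σ)
      (ofLab2_congr .and (subst_ofLab2 .imp rfl _ _ σ) (subst_ofLab2 .imp rfl _ _ σ))
  | @lob φ' h ih =>
    refine CHL.lob (chl_transfer ih ?_)
    exact bisim_trans (subst_ofLab2 .imp rfl _ _ σ)
      (ofLab2_congr .imp (subst_ofLab1 .box rfl _ σ) (bisim_refl _))
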